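/- Let v : [0,1]² → ℝ be Lipschitz continuous with constant C in the ℓ¹ sense, i.e. |v(x,y) − v(x′,y′)| ≤ C(|x − x′| + |y − y′|). Let i_1 = 2^{j_1} + k_1 + 1 and i_2 = 2^{j_2} + k_2 + 1 be wavelet indices (possibly at different levels), and set δ_1 = 2^{−j_1−1}, δ_2 = 2^{−j_2−1}. Then |∫_0^1 ∫_0^1 v(x,y) h_{i_1}(x) h_{i_2}(y) dx dy| ≤ 2C · min(δ_1, δ_2) · δ_1 δ_2. -/

import Mathlib

open MeasureTheory

/-- The Haar wavelet on `[0,1)` at dyadic level `j` with shift `k`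
(corresponding to wavelet index `i = 2^j + k + 1 ≥ 2`). -/
noncomputable def haarFn (A B : ℝ) (j k : ℕ) (x : ℝ) : ℝ :=
  if A + k * (B - A) / 2 ^ j ≤ x ∧ x < A + (k + 1 / 2) * (B - A) / 2 ^ j then 1
  else if A + (k + 1 / 2) * (B - A) / 2 ^ j ≤ x ∧ x < A + (k + 1) * (B - A) / 2 ^ j then -1
  else 0

/-!
Against a Haar function that is `1` on `[a, a + δ)` and `-1` on `[a + δ, a + 2δ)`, translating
the negative half onto the positive one gives `∫ f h = ∫_a^{a+δ} (f t - f (t + δ)) dt`.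
Doing this first in `y` and then in `x` turns the coefficient into the integral over a
`δ₁ × δ₂` box of the mixed difference `v(x,y) - v(x,y+δ₂) - v(x+δ₁,y) + v(x+δ₁,y+δ₂)`.
Pairing its four terms along `x` bounds it by `2Cδ₁`, pairing them along `y` by `2Cδ₂`.
-/

open Set
open scoped Interval

noncomputable def haarStart (j k : ℕ) : ℝ := k / 2 ^ j

noncomputable def haarHalfWidth (j : ℕ) : ℝ := 2 ^ (-(j : ℤ) - 1)

lemma haarHalfWidth_eq (j : ℕ) : haarHalfWidth j = 1 / (2 * 2 ^ j) := by
  rw [haarHalfWidth, zpow_sub₀ two_ne_zero, zpow_neg, zpow_natCast, zpow_one]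
  ring

lemma haarHalfWidth_pos (j : ℕ) : 0 < haarHalfWidth j := by
  unfold haarHalfWidth; positivity

lemma haarStart_nonneg (j k : ℕ) : 0 ≤ haarStart j k := by
  unfold haarStart; positivity

lemma haarStart_add_haarHalfWidth_add_haarHalfWidth_le_one {j k : ℕ} (hk : k < 2 ^ j) :
    haarStart j k + haarHalfWidth j + haarHalfWidth j ≤ 1 := by
  have hk' : (k : ℝ) + 1 ≤ 2 ^ j := by exact_mod_cast hk
  rw [haarStart, haarHalfWidth_eq]
  field_simp
  linarith

lemma haarFn_zero_one (j k : ℕ) :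
    haarFn 0 1 j k =
      (Ico (haarStart j k) (haarStart j k + haarHalfWidth j)).indicator 1 -
      (Ico (haarStart j k + haarHalfWidth j)
        (haarStart j k + haarHalfWidth j + haarHalfWidth j)).indicator 1 := by
  have hstart : (0 : ℝ) + k * (1 - 0) / 2 ^ j = haarStart j k := by
    rw [haarStart]; ring
  have hmid : (0 : ℝ) + (k + 1 / 2) * (1 - 0) / 2 ^ j = haarStart j k + haarHalfWidth j := by
    rw [haarStart, haarHalfWidth_eq]; field_simp; ring
  have hend : (0 : ℝ) + (k + 1) * (1 - 0) / 2 ^ j =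
      haarStart j k + haarHalfWidth j + haarHalfWidth j := by
    rw [haarStart, haarHalfWidth_eq]; field_simp; ring
  ext x
  simp only [haarFn, hstart, hmid, hend, Pi.sub_apply, indicator_apply, mem_Ico, Pi.one_apply]
  split_ifs with hleft hright <;> norm_num
  linarith [hleft.2, hright.1]

lemma measurable_haarFn_zero_one (j k : ℕ) : Measurable (haarFn 0 1 j k) := by
  rw [haarFn_zero_one]
  exact (measurable_const.indicator measurableSet_Ico).sub
    (measurable_const.indicator measurableSet_Ico)

lemma abs_haarFn_le_one (A B : ℝ) (j k : ℕ) (x : ℝ) : |haarFn A B j k x| ≤ 1 := by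
  unfold haarFn; split_ifs <;> norm_num

lemma intervalIntegral_indicator_Ico {E : Type*} [NormedAddCommGroup E] [NormedSpace ℝ E]
    {f : ℝ → E} {a b c d : ℝ} (hca : c ≤ a) (hab : a ≤ b) (hbd : b ≤ d) :
    ∫ x in c..d, (Ico a b).indicator f x = ∫ x in a..b, f x := by
  rw [intervalIntegral.integral_of_le (hca.trans (hab.trans hbd)),
    intervalIntegral.integral_of_le hab,
    integral_congr_ae (ae_restrict_of_ae (indicator_ae_eq_of_ae_eq_set Ico_ae_eq_Ioc)),
    setIntegral_indicator measurableSet_Ioc, inter_eq_right.mpr (Ioc_subset_Ioc hca hbd)]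

lemma intervalIntegrable_of_integrableOn_Icc {f : ℝ → ℝ} {a b c d : ℝ}
    (hf : IntegrableOn f (Icc c d)) (hca : c ≤ a) (hab : a ≤ b) (hbd : b ≤ d) :
    IntervalIntegrable f volume a b :=
  (hf.mono_set (by rw [uIcc_of_le hab]; exact Icc_subset_Icc hca hbd)).intervalIntegrable

lemma intervalIntegrable_comp_add_of_integrableOn_Icc {f : ℝ → ℝ} {a b c d δ : ℝ}
    (hf : IntegrableOn f (Icc c d)) (hca : c ≤ a + δ) (hab : a ≤ b) (hbd : b + δ ≤ d) :
    IntervalIntegrable (fun t => f (t + δ)) volume a b := by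
  simpa using (intervalIntegrable_of_integrableOn_Icc hf hca (by linarith) hbd).comp_add_right δ

lemma integral_mul_indicator_sub_indicator {f : ℝ → ℝ} {a c d δ : ℝ}
    (hf : IntegrableOn f (Icc c d)) (hca : c ≤ a) (hδ : 0 ≤ δ) (had : a + δ + δ ≤ d) :
    ∫ x in c..d, f x * ((Ico a (a + δ)).indicator 1 x - (Ico (a + δ) (a + δ + δ)).indicator 1 x)
      = ∫ t in a..a + δ, (f t - f (t + δ)) := by
  have hind : ∀ p q : ℝ, IntervalIntegrable ((Ico p q).indicator f) volume c d := fun _ _ =>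
    (intervalIntegrable_iff_integrableOn_Ioc_of_le (by linarith)).2
      ((hf.indicator measurableSet_Ico).mono_set Ioc_subset_Icc_self)
  simp only [mul_sub, ← indicator_mul_right, Pi.one_apply, mul_one]
  rw [intervalIntegral.integral_sub (hind _ _) (hind _ _),
    intervalIntegral.integral_sub
      (intervalIntegrable_of_integrableOn_Icc hf hca (by linarith) (by linarith))
      (intervalIntegrable_comp_add_of_integrableOn_Icc hf (by linarith) (by linarith) had),
    intervalIntegral_indicator_Ico hca (by linarith) (by linarith),
    intervalIntegral_indicator_Ico (by linarith) (by linarith) had,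
    intervalIntegral.integral_comp_add_right]

lemma integral_mul_haarFn {f : ℝ → ℝ} {j k : ℕ} (hf : IntegrableOn f (Icc 0 1))
    (hk : k < 2 ^ j) :
    ∫ x in (0 : ℝ)..1, f x * haarFn 0 1 j k x =
      ∫ t in haarStart j k..haarStart j k + haarHalfWidth j, (f t - f (t + haarHalfWidth j)) := by
  rw [haarFn_zero_one]
  exact integral_mul_indicator_sub_indicator hf (haarStart_nonneg j k)
    (haarHalfWidth_pos j).le (haarStart_add_haarHalfWidth_add_haarHalfWidth_le_one hk)

lemma mem_Icc_of_mem_uIoc_haarStart {j k : ℕ} (hk : k < 2 ^ j) {x : ℝ}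
    (hx : x ∈ Ι (haarStart j k) (haarStart j k + haarHalfWidth j)) :
    x ∈ Icc (0 : ℝ) 1 ∧ x + haarHalfWidth j ∈ Icc (0 : ℝ) 1 := by
  have h₀ := haarStart_nonneg j k
  have h₁ := haarStart_add_haarHalfWidth_add_haarHalfWidth_le_one hk
  have hδ := haarHalfWidth_pos j
  rw [uIoc_of_le (by linarith)] at hx
  exact ⟨⟨by linarith [hx.1], by linarith [hx.2]⟩, ⟨by linarith [hx.1], by linarith [hx.2]⟩⟩

def L1LipschitzOn (C : ℝ) (v : ℝ → ℝ → ℝ) (s : Set ℝ) : Prop :=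
  ∀ x ∈ s, ∀ y ∈ s, ∀ x' ∈ s, ∀ y' ∈ s, |v x y - v x' y'| ≤ C * (|x - x'| + |y - y'|)

namespace L1LipschitzOn

variable {C : ℝ} {v : ℝ → ℝ → ℝ} {s : Set ℝ}

lemma abs_sub_left_le (hv : L1LipschitzOn C v s) {x x' y : ℝ} (hx : x ∈ s) (hx' : x' ∈ s)
    (hy : y ∈ s) : |v x y - v x' y| ≤ C * |x - x'| := by
  simpa using hv x hx y hy x' hx' y hy

lemma abs_sub_right_le (hv : L1LipschitzOn C v s) {x y y' : ℝ} (hx : x ∈ s) (hy : y ∈ s)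
    (hy' : y' ∈ s) : |v x y - v x y'| ≤ C * |y - y'| := by
  simpa using hv x hx y hy x hx y' hy'

lemma continuousOn_right (hv : L1LipschitzOn C v s) {x : ℝ} (hx : x ∈ s) :
    ContinuousOn (v x) s :=
  (LipschitzOnWith.of_dist_le' fun _ hy _ hy' => by
    simpa only [Real.dist_eq] using hv.abs_sub_right_le hx hy hy').continuousOn

lemma lipschitzOnWith_integral_mul (hv : L1LipschitzOn C v (Icc 0 1)) {w : ℝ → ℝ}
    (hw : Measurable w) (hw_le : ∀ y, |w y| ≤ 1) :
    LipschitzOnWith C.toNNReal (fun x => ∫ y in (0 : ℝ)..1, v x y * w y) (Icc 0 1) := by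
  have hint : ∀ x ∈ Icc (0 : ℝ) 1, IntervalIntegrable (fun y => v x y * w y) volume 0 1 :=
    fun x hx => (intervalIntegrable_iff_integrableOn_Icc_of_le zero_le_one).2 <|
      (hv.continuousOn_right hx).integrableOn_Icc.mul_bdd hw.aestronglyMeasurable
        (ae_of_all _ hw_le)
  refine LipschitzOnWith.of_dist_le' fun x hx x' hx' => ?_
  rw [Real.dist_eq, Real.dist_eq, ← intervalIntegral.integral_sub (hint x hx) (hint x' hx')]
  calc |∫ y in (0 : ℝ)..1, (v x y * w y - v x' y * w y)|
      ≤ C * |x - x'| * |1 - 0| := by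
        refine intervalIntegral.norm_integral_le_of_norm_le_const (E := ℝ) fun y hy => ?_
        have hy : y ∈ Icc (0 : ℝ) 1 := Ioc_subset_Icc_self (by simpa using hy)
        rw [Real.norm_eq_abs, ← sub_mul, abs_mul]
        exact (mul_le_of_le_one_right (abs_nonneg _) (hw_le y)).trans
          (hv.abs_sub_left_le hx hx' hy)
    _ = C * |x - x'| := by norm_num

lemma abs_mixed_diff_le (hv : L1LipschitzOn C v s) {x y δ₁ δ₂ : ℝ} (hδ₁ : 0 ≤ δ₁)
    (hδ₂ : 0 ≤ δ₂) (hx : x ∈ s) (hx' : x + δ₁ ∈ s) (hy : y ∈ s) (hy' : y + δ₂ ∈ s) :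
    |(v x y - v x (y + δ₂)) - (v (x + δ₁) y - v (x + δ₁) (y + δ₂))| ≤ 2 * C * min δ₁ δ₂ := by
  rcases le_total δ₁ δ₂ with h | h
  · have h₁ := hv.abs_sub_left_le hx hx' hy
    have h₂ := hv.abs_sub_left_le hx hx' hy'
    rw [sub_add_cancel_left, abs_neg, abs_of_nonneg hδ₁] at h₁ h₂
    calc _ = |(v x y - v (x + δ₁) y) - (v x (y + δ₂) - v (x + δ₁) (y + δ₂))| := by ring_nf
      _ ≤ C * δ₁ + C * δ₁ := (abs_sub _ _).trans (add_le_add h₁ h₂)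
      _ = 2 * C * min δ₁ δ₂ := by rw [min_eq_left h]; ring
  · have h₁ := hv.abs_sub_right_le hx hy hy'
    have h₂ := hv.abs_sub_right_le hx' hy hy'
    rw [sub_add_cancel_left, abs_neg, abs_of_nonneg hδ₂] at h₁ h₂
    calc _ ≤ C * δ₂ + C * δ₂ := (abs_sub _ _).trans (add_le_add h₁ h₂)
      _ = 2 * C * min δ₁ δ₂ := by rw [min_eq_right h]; ring

lemma abs_integral_mixed_diff_le {c d : ℝ} (hv : L1LipschitzOn C v (Icc c d))
    {x a δ₁ δ₂ : ℝ} (hδ₁ : 0 ≤ δ₁) (hδ₂ : 0 ≤ δ₂) (hx : x ∈ Icc c d) (hx' : x + δ₁ ∈ Icc c d)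
    (hca : c ≤ a) (had : a + δ₂ + δ₂ ≤ d) :
    |(∫ y in a..a + δ₂, (v x y - v x (y + δ₂))) -
        ∫ y in a..a + δ₂, (v (x + δ₁) y - v (x + δ₁) (y + δ₂))| ≤ 2 * C * min δ₁ δ₂ * δ₂ := by
  have hint : ∀ z ∈ Icc c d,
      IntervalIntegrable (fun y => v z y - v z (y + δ₂)) volume a (a + δ₂) := fun z hz =>
    have hvz := (hv.continuousOn_right hz).integrableOn_Icc
    (intervalIntegrable_of_integrableOn_Icc hvz hca (by linarith) (by linarith)).sub
      (intervalIntegrable_comp_add_of_integrableOn_Icc hvz (by linarith) (by linarith) had)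
  rw [← intervalIntegral.integral_sub (hint x hx) (hint _ hx')]
  calc _ ≤ 2 * C * min δ₁ δ₂ * |a + δ₂ - a| := by
        refine intervalIntegral.norm_integral_le_of_norm_le_const (E := ℝ) fun y hy => ?_
        rw [uIoc_of_le (by linarith)] at hy
        rw [Real.norm_eq_abs]
        exact hv.abs_mixed_diff_le hδ₁ hδ₂ hx hx' ⟨by linarith [hy.1], by linarith [hy.2]⟩
          ⟨by linarith [hy.1], by linarith [hy.2]⟩
    _ = 2 * C * min δ₁ δ₂ * δ₂ := by rw [add_sub_cancel_left, abs_of_nonneg hδ₂]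

end L1LipschitzOn

/-- If `v` is Lipschitz on `[0,1]²` with constant `C` in the `ℓ¹` sense, then the
two-dimensional Haar coefficient at (possibly different) levels `j₁, j₂`, with
half-support lengths `δᵢ = 2^{-jᵢ-1}`, is bounded by `2C·min(δ₁,δ₂)·δ₁δ₂`. -/
theorem haar_coeff2d_mixed_level_bound (C : ℝ) (v : ℝ → ℝ → ℝ)
    (hv : ∀ x ∈ Set.Icc (0 : ℝ) 1, ∀ y ∈ Set.Icc (0 : ℝ) 1,
      ∀ x' ∈ Set.Icc (0 : ℝ) 1, ∀ y' ∈ Set.Icc (0 : ℝ) 1,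
      |v x y - v x' y'| ≤ C * (|x - x'| + |y - y'|))
    (j1 k1 j2 k2 : ℕ) (hk1 : k1 < 2 ^ j1) (hk2 : k2 < 2 ^ j2)
    (δ1 δ2 : ℝ) (hδ1 : δ1 = (2 : ℝ) ^ (-(j1 : ℤ) - 1))
    (hδ2 : δ2 = (2 : ℝ) ^ (-(j2 : ℤ) - 1)) :
    |∫ x in (0 : ℝ)..1, ∫ y in (0 : ℝ)..1,
        v x y * haarFn 0 1 j1 k1 x * haarFn 0 1 j2 k2 y| ≤
      2 * C * min δ1 δ2 * (δ1 * δ2) := by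
  replace hv : L1LipschitzOn C v (Icc 0 1) := hv
  obtain rfl : δ1 = haarHalfWidth j1 := hδ1
  obtain rfl : δ2 = haarHalfWidth j2 := hδ2
  set H : ℝ → ℝ := fun x => ∫ y in (0 : ℝ)..1, v x y * haarFn 0 1 j2 k2 y
  have hH : ∀ x ∈ Icc (0 : ℝ) 1, H x =
      ∫ y in haarStart j2 k2..haarStart j2 k2 + haarHalfWidth j2,
        (v x y - v x (y + haarHalfWidth j2)) :=
    fun x hx => integral_mul_haarFn (hv.continuousOn_right hx).integrableOn_Icc hk2
  have hH_int : IntegrableOn H (Icc 0 1) :=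
    (hv.lipschitzOnWith_integral_mul (measurable_haarFn_zero_one j2 k2)
      (abs_haarFn_le_one 0 1 j2 k2)).continuousOn.integrableOn_Icc
  have hH_diff : ∀ x ∈ Ι (haarStart j1 k1) (haarStart j1 k1 + haarHalfWidth j1),
      ‖H x - H (x + haarHalfWidth j1)‖ ≤
        2 * C * min (haarHalfWidth j1) (haarHalfWidth j2) * haarHalfWidth j2 := fun x hx => by
    obtain ⟨hx, hx'⟩ := mem_Icc_of_mem_uIoc_haarStart hk1 hx
    rw [Real.norm_eq_abs, hH x hx, hH _ hx']
    exact hv.abs_integral_mixed_diff_le (haarHalfWidth_pos j1).le (haarHalfWidth_pos j2).le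
      hx hx' (haarStart_nonneg j2 k2) (haarStart_add_haarHalfWidth_add_haarHalfWidth_le_one hk2)
  have hsep : (∫ x in (0 : ℝ)..1, ∫ y in (0 : ℝ)..1,
      v x y * haarFn 0 1 j1 k1 x * haarFn 0 1 j2 k2 y) =
        ∫ x in (0 : ℝ)..1, H x * haarFn 0 1 j1 k1 x :=
    intervalIntegral.integral_congr fun x _ => by
      simp only [H, ← intervalIntegral.integral_mul_const, mul_right_comm]
  rw [hsep, integral_mul_haarFn hH_int hk1]
  refine (intervalIntegral.norm_integral_le_of_norm_le_const hH_diff).trans_eq ?_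
  rw [add_sub_cancel_left, abs_of_pos (haarHalfWidth_pos j1)]
  ring
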